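/- arXiv:2111.07472 — 3 statements merged into one kernel-verified Lean document; each statement's English description precedes it below -/
import Mathlib

section
/- For every real number t > 0, one has tanh(t/2)^2 / (t^2 · arctan(1/sinh(t/2))) ≥ 1/(2π). -/
/-! With `s = t / 2` the claim is `2 s² arctan (sinh s)⁻¹ ≤ π tanh² s`. Since
`tanh s = sin (arctan (sinh s))` (the Gudermannian `gd s = arctan (sinh s)`), `tanh s ≤ gd s`,
while `arctan (sinh s)⁻¹ = π / 2 - gd s`. For `s ≤ 1` this and the Padé bound
`3 s / (3 + s²) ≤ tanh s` leave a polynomial inequality. For `s ≥ 1` the cruder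
`arctan (sinh s)⁻¹ ≤ (sinh s)⁻¹`, `tanh² = sinh² / (1 + sinh²)` and `s + s³ / 6 ≤ sinh s` suffice. -/

open Real

namespace Real

open Set

lemma arctan_le_self {x : ℝ} (hx : 0 ≤ x) : arctan x ≤ x := by
  simpa [tan_arctan] using le_tan (arctan_nonneg.2 hx) (arctan_lt_pi_div_two x)

lemma sin_arctan_sinh (x : ℝ) : sin (arctan (sinh x)) = tanh x := by
  rw [sin_arctan, ← tanh_arsinh, arsinh_sinh]

lemma tanh_le_arctan_sinh {x : ℝ} (hx : 0 ≤ x) : tanh x ≤ arctan (sinh x) :=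
  sin_arctan_sinh x ▸ sin_le (arctan_nonneg.2 (sinh_nonneg_iff.2 hx))

lemma tanh_sq_eq_sinh_sq_div (x : ℝ) : tanh x ^ 2 = sinh x ^ 2 / (1 + sinh x ^ 2) := by
  rw [tanh_eq_sinh_div_cosh, div_pow, cosh_sq']

lemma self_add_cube_div_six_le_sinh {x : ℝ} (hx : 0 ≤ x) : x + x ^ 3 / 6 ≤ sinh x := by
  have h := sum_le_hasSum (Finset.range 2) (fun n _ => by positivity) (hasSum_sinh x)
  norm_num [Finset.sum_range_succ, Nat.factorial] at h
  exact h

lemma sinh_le_mul_cosh {x : ℝ} (hx : 0 ≤ x) : sinh x ≤ x * cosh x := by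
  have hderiv (y : ℝ) : HasDerivAt (fun y => y * cosh y - sinh y) (y * sinh y) y :=
    (((hasDerivAt_id' y).mul (hasDerivAt_cosh y)).sub (hasDerivAt_sinh y)).congr_deriv (by ring)
  have hmono : MonotoneOn (fun y => y * cosh y - sinh y) (Ici 0) := by
    refine monotoneOn_of_deriv_nonneg (convex_Ici 0) (by fun_prop) (by fun_prop) fun y hy => ?_
    rw [interior_Ici] at hy
    rw [(hderiv y).deriv]
    exact mul_nonneg hy.le (sinh_nonneg_iff.2 hy.le)
  simpa using hmono self_mem_Ici hx hx

lemma three_mul_div_le_tanh {x : ℝ} (hx : 0 ≤ x) : 3 * x / (3 + x ^ 2) ≤ tanh x := by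
  have hderiv (y : ℝ) : HasDerivAt (fun y => (3 + y ^ 2) * sinh y - 3 * y * cosh y)
      (y * (y * cosh y - sinh y)) y :=
    ((((hasDerivAt_pow 2 y).const_add 3).mul (hasDerivAt_sinh y)).sub
      (((hasDerivAt_id' y).const_mul 3).mul (hasDerivAt_cosh y))).congr_deriv (by ring)
  have hmono : MonotoneOn (fun y => (3 + y ^ 2) * sinh y - 3 * y * cosh y) (Ici 0) := by
    refine monotoneOn_of_deriv_nonneg (convex_Ici 0) (by fun_prop) (by fun_prop) fun y hy => ?_
    rw [interior_Ici] at hy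
    rw [(hderiv y).deriv]
    exact mul_nonneg hy.le (sub_nonneg.2 (sinh_le_mul_cosh hy.le))
  have h := hmono self_mem_Ici hx hx
  simp only [sinh_zero, cosh_zero] at h
  rw [tanh_eq_sinh_div_cosh, div_le_div_iff₀ (by positivity) (cosh_pos x)]
  linarith

lemma pi_mul_sq_le_of_three_mul_div_le {s T : ℝ} (hs₀ : 0 ≤ s) (hs₁ : s ≤ 1)
    (hT : 3 * s / (3 + s ^ 2) ≤ T) : π * s ^ 2 ≤ π * T ^ 2 + 2 * s ^ 2 * T := by
  set L := 3 * s / (3 + s ^ 2) with hL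
  have hL₀ : 0 ≤ L := by positivity
  have hgap : π * L ^ 2 + 2 * s ^ 2 * L - π * s ^ 2 =
      s ^ 3 * (6 * (3 + s ^ 2) - π * s * (6 + s ^ 2)) / (3 + s ^ 2) ^ 2 := by
    rw [hL]; field_simp; ring
  have hfactor : 0 ≤ 6 * (3 + s ^ 2) - π * s * (6 + s ^ 2) := by
    nlinarith [pi_lt_d2, mul_nonneg hs₀ (sq_nonneg s), mul_nonneg (sub_nonneg.2 hs₁) hs₀]
  have hL_bound : π * s ^ 2 ≤ π * L ^ 2 + 2 * s ^ 2 * L := by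
    have : 0 ≤ s ^ 3 * (6 * (3 + s ^ 2) - π * s * (6 + s ^ 2)) / (3 + s ^ 2) ^ 2 := by
      positivity
    linarith
  have hTL : 0 ≤ π * (T + L) + 2 * s ^ 2 := by nlinarith [pi_pos]
  nlinarith [mul_nonneg (sub_nonneg.2 hT) hTL]

lemma two_mul_sq_mul_one_add_sq_le_pi_mul_cube {s h : ℝ} (hs : 1 ≤ s)
    (hh : s + s ^ 3 / 6 ≤ h) : 2 * s ^ 2 * (1 + h ^ 2) ≤ π * h ^ 3 := by
  have hbase : 2 * s ^ 2 * (1 + (s + s ^ 3 / 6) ^ 2) ≤ 3.14 * (s + s ^ 3 / 6) ^ 3 := by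
    obtain ⟨u, hu, rfl⟩ : ∃ u, 0 ≤ u ∧ s = 1 + u := ⟨s - 1, by linarith, by ring⟩
    nlinarith [pow_nonneg hu 2, pow_nonneg hu 3, pow_nonneg hu 4, pow_nonneg hu 5,
      pow_nonneg hu 6, pow_nonneg hu 7, pow_nonneg hu 8, pow_nonneg hu 9]
  set p := s + s ^ 3 / 6
  have hs₀ : 0 ≤ s := by linarith
  have hp₀ : 0 ≤ p := by positivity
  have hp_bound : 2 * s ^ 2 ≤ π * p := by
    nlinarith [mul_nonneg (sub_nonneg.2 pi_gt_d2.le) hp₀, mul_nonneg hs₀ (sq_nonneg (s - 2))]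
  have hmono : π * p ^ 3 - 2 * s ^ 2 * (1 + p ^ 2) ≤ π * h ^ 3 - 2 * s ^ 2 * (1 + h ^ 2) := by
    have : 0 ≤ π * (h ^ 2 + h * p + p ^ 2) - 2 * s ^ 2 * (h + p) := by
      nlinarith [mul_nonneg (by linarith : 0 ≤ h + p) (sub_nonneg.2 hp_bound), pi_pos, sq_nonneg h]
    nlinarith [mul_nonneg (sub_nonneg.2 hh) this]
  nlinarith [mul_nonneg (sub_nonneg.2 pi_gt_d2.le) (pow_nonneg hp₀ 3)]

lemma two_mul_sq_mul_arctan_inv_sinh_le_of_le_one {s : ℝ} (hs₀ : 0 < s) (hs₁ : s ≤ 1) :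
    2 * s ^ 2 * arctan (sinh s)⁻¹ ≤ π * tanh s ^ 2 := by
  rw [arctan_inv_of_pos (sinh_pos_iff.2 hs₀)]
  have hT := pi_mul_sq_le_of_three_mul_div_le hs₀.le hs₁ (three_mul_div_le_tanh hs₀.le)
  nlinarith [mul_le_mul_of_nonneg_left (tanh_le_arctan_sinh hs₀.le) (sq_nonneg s)]

lemma two_mul_sq_mul_arctan_inv_sinh_le_of_one_le {s : ℝ} (hs : 1 ≤ s) :
    2 * s ^ 2 * arctan (sinh s)⁻¹ ≤ π * tanh s ^ 2 := by
  have hsinh : 0 < sinh s := sinh_pos_iff.2 (by linarith)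
  calc 2 * s ^ 2 * arctan (sinh s)⁻¹ ≤ 2 * s ^ 2 / sinh s := by
        rw [div_eq_mul_inv]; gcongr; exact arctan_le_self (by positivity)
    _ ≤ π * (sinh s ^ 2 / (1 + sinh s ^ 2)) := by
        rw [mul_div_assoc', div_le_div_iff₀ hsinh (by positivity)]
        linear_combination two_mul_sq_mul_one_add_sq_le_pi_mul_cube hs
          (self_add_cube_div_six_le_sinh (by linarith))
    _ = π * tanh s ^ 2 := by rw [tanh_sq_eq_sinh_sq_div]

lemma two_mul_sq_mul_arctan_inv_sinh_le {s : ℝ} (hs : 0 < s) :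
    2 * s ^ 2 * arctan (sinh s)⁻¹ ≤ π * tanh s ^ 2 := by
  rcases le_total s 1 with hs₁ | hs₁
  · exact two_mul_sq_mul_arctan_inv_sinh_le_of_le_one hs hs₁
  · exact two_mul_sq_mul_arctan_inv_sinh_le_of_one_le hs₁

end Real

theorem tanh_sq_div_ge_inv_two_pi (t : ℝ) (ht : 0 < t) :
    Real.tanh (t / 2) ^ 2 / (t ^ 2 * Real.arctan (1 / Real.sinh (t / 2))) ≥
      1 / (2 * Real.pi) := by
  have hs : 0 < t / 2 := by positivity
  have harctan : 0 < arctan (sinh (t / 2))⁻¹ := arctan_pos.2 (inv_pos.2 (sinh_pos_iff.2 hs))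
  rw [one_div (sinh _), ge_iff_le, div_le_div_iff₀ (by positivity) (by positivity)]
  linear_combination 2 * two_mul_sq_mul_arctan_inv_sinh_le hs
end

section
/- For every real number t ≥ 1, one has t · arcsinh(1/sinh(log(coth(π/12) · t))) ≤ π/6; equivalently, with s := log(coth(π/12)·t), one has 2(π/3 − t · arcsinh(1/sinh s)) ≥ π/3. -/
open Real

noncomputable def Real.coth (x : ℝ) : ℝ := Real.cosh x / Real.sinh x

/-!
With `x = coth(π/12) · t`, one has `arsinh (1 / sinh (log x)) = log ((x + 1) / (x - 1))`, and
`x ↦ x · log ((x + 1) / (x - 1))` is antitone on `(1, ∞)` because its derivative is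
`L - sinh L ≤ 0` with `L = log ((x + 1) / (x - 1))`. Hence for `t ≥ 1` the quantity is at most
its value `log ((c + 1) / (c - 1)) = 2 · (π / 12)` at `t = 1`, where `c = coth (π / 12)`.
-/

namespace Real

lemma sinh_log_add_one_div_sub_one {x : ℝ} (hx : 1 < x) :
    sinh (log ((x + 1) / (x - 1))) = 2 * x / (x ^ 2 - 1) := by
  have hx₁ : x - 1 ≠ 0 := by linarith
  have hx₂ : x + 1 ≠ 0 := by linarith
  have hx₃ : x ^ 2 - 1 ≠ 0 := by nlinarith
  rw [sinh_log (div_pos (by linarith) (by linarith)), inv_div]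
  field_simp
  ring

lemma arsinh_inv_sinh_log {x : ℝ} (hx : 1 < x) :
    arsinh (1 / sinh (log x)) = log ((x + 1) / (x - 1)) := by
  have hx₂ : x ^ 2 - 1 ≠ 0 := by nlinarith
  rw [← arsinh_sinh (log ((x + 1) / (x - 1))), sinh_log_add_one_div_sub_one hx,
    sinh_log (by linarith)]
  congr 1
  field_simp

lemma log_coth_add_one_div_coth_sub_one {u : ℝ} (hu : 0 < u) :
    log ((coth u + 1) / (coth u - 1)) = 2 * u := by
  have hsinh : sinh u ≠ 0 := (sinh_pos_iff.mpr hu).ne'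
  have hquot : (coth u + 1) / (coth u - 1) = exp u / exp (-u) := by
    rw [coth, ← cosh_add_sinh, ← cosh_sub_sinh]
    field_simp
  rw [hquot, ← exp_sub, log_exp]
  ring

lemma one_lt_coth {u : ℝ} (hu : 0 < u) : 1 < coth u := by
  rw [coth, one_lt_div (sinh_pos_iff.mpr hu)]
  exact sinh_lt_cosh u

lemma hasDerivAt_mul_log_add_one_div_sub_one {x : ℝ} (hx : 1 < x) :
    HasDerivAt (fun y => y * log ((y + 1) / (y - 1)))
      (log ((x + 1) / (x - 1)) - 2 * x / (x ^ 2 - 1)) x := by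
  have hx₁ : x - 1 ≠ 0 := by linarith
  have hx₂ : x + 1 ≠ 0 := by linarith
  have hx₃ : x ^ 2 - 1 ≠ 0 := by nlinarith
  have hquot : HasDerivAt (fun y => (y + 1) / (y - 1)) (-2 / (x - 1) ^ 2) x :=
    (((hasDerivAt_id' x).add_const 1).div ((hasDerivAt_id' x).sub_const 1) hx₁).congr_deriv
      (by ring)
  refine ((hasDerivAt_id' x).mul (hquot.log (div_ne_zero hx₂ hx₁))).congr_deriv ?_
  field_simp
  ring

lemma antitoneOn_mul_log_add_one_div_sub_one :
    AntitoneOn (fun x => x * log ((x + 1) / (x - 1))) (Set.Ioi 1) := by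
  refine antitoneOn_of_hasDerivWithinAt_nonpos (convex_Ioi 1)
    (f' := fun x => log ((x + 1) / (x - 1)) - 2 * x / (x ^ 2 - 1))
    (fun x hx => (hasDerivAt_mul_log_add_one_div_sub_one hx).continuousAt.continuousWithinAt)
    (fun x hx => ?_) (fun x hx => ?_)
  · rw [interior_Ioi] at hx
    exact (hasDerivAt_mul_log_add_one_div_sub_one hx).hasDerivWithinAt
  · rw [interior_Ioi] at hx
    have hx : 1 < x := hx
    have hL : 0 < log ((x + 1) / (x - 1)) :=
      log_pos ((one_lt_div (by linarith)).mpr (by linarith))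
    have hsinh := self_lt_sinh_iff.mpr hL
    rw [sinh_log_add_one_div_sub_one hx] at hsinh
    linarith

lemma mul_log_add_one_div_sub_one_le {c t : ℝ} (hc : 1 < c) (ht : 1 ≤ t) :
    t * log ((c * t + 1) / (c * t - 1)) ≤ log ((c + 1) / (c - 1)) := by
  have hc₀ : 0 < c := by linarith
  have hct : c ≤ c * t := le_mul_of_one_le_right hc₀.le ht
  have hanti := antitoneOn_mul_log_add_one_div_sub_one hc (lt_of_lt_of_le hc hct) hct
  rw [← mul_le_mul_iff_of_pos_left hc₀]
  linarith

end Real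

theorem mul_arsinh_inv_sinh_log_coth_le (t : ℝ) (ht : 1 ≤ t) :
    t * Real.arsinh (1 / Real.sinh (Real.log (Real.coth (Real.pi / 12) * t))) ≤
      Real.pi / 6 ∧
    2 * (Real.pi / 3 -
        t * Real.arsinh (1 / Real.sinh (Real.log (Real.coth (Real.pi / 12) * t)))) ≥
      Real.pi / 3 := by
  have hu : 0 < π / 12 := by positivity
  have hc := one_lt_coth hu
  have hbound : t * arsinh (1 / sinh (log (coth (π / 12) * t))) ≤ π / 6 := by
    rw [arsinh_inv_sinh_log (by nlinarith)]
    calc t * log ((coth (π / 12) * t + 1) / (coth (π / 12) * t - 1))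
        ≤ log ((coth (π / 12) + 1) / (coth (π / 12) - 1)) :=
          mul_log_add_one_div_sub_one_le hc ht
      _ = π / 6 := by rw [log_coth_add_one_div_coth_sub_one hu]; ring
  exact ⟨hbound, by linarith⟩
end

section
/- For every real number x > 0, one has x · arcsinh(1/sinh(x/2)) < 1.56. -/
open Real

lemma log_le_sinh_bound {w : ℝ} (hw : 1 ≤ w) : Real.log w ≤ (w - w⁻¹) / 2 := by
  have h0 : (0:ℝ) < w := lt_of_lt_of_le one_pos hw
  have h1 : Real.log w ≤ Real.sinh (Real.log w) :=
    (Real.self_le_sinh_iff).2 (Real.log_nonneg hw)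
  rwa [Real.sinh_log h0] at h1

lemma pade_log_lower {w : ℝ} (hw : 1 ≤ w) : 2 * (w - 1) / (w + 1) ≤ Real.log w := by
  set f : ℝ → ℝ := fun v => Real.log v - 2 * (v - 1) / (v + 1) with hf
  have hd : ∀ x : ℝ, 0 < x → HasDerivAt f (x⁻¹ - (2 * (x + 1) - 2 * (x - 1) * 1) / (x + 1) ^ 2) x := by
    intro x hx
    have hx1 : x + 1 ≠ 0 := by positivity
    have h1 : HasDerivAt (fun v : ℝ => 2 * (v - 1)) 2 x := by
      simpa using ((hasDerivAt_id x).sub_const 1).const_mul 2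
    have h2 : HasDerivAt (fun v : ℝ => v + 1) 1 x := (hasDerivAt_id x).add_const 1
    exact (Real.hasDerivAt_log (ne_of_gt hx)).sub (h1.div h2 hx1)
  have hmono : MonotoneOn f (Set.Ici (1:ℝ)) := by
    apply monotoneOn_of_deriv_nonneg (convex_Ici 1)
    · intro x hx
      exact (hd x (lt_of_lt_of_le one_pos hx)).continuousAt.continuousWithinAt
    · intro x hx
      rw [interior_Ici] at hx
      exact (hd x (lt_trans one_pos hx)).differentiableAt.differentiableWithinAt
    · intro x hx
      rw [interior_Ici] at hx
      have hx1 : (1:ℝ) < x := hx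
      have h0 : (0:ℝ) < x := lt_trans one_pos hx1
      rw [(hd x h0).deriv]
      rw [sub_nonneg, div_le_iff₀ (by positivity : (0:ℝ) < (x+1)^2), inv_mul_eq_div,
        le_div_iff₀ h0]
      nlinarith [sq_nonneg (x - 1)]
  have h := hmono (Set.mem_Ici.2 le_rfl) (Set.mem_Ici.2 hw) hw
  have hf1 : f 1 = 0 := by simp [hf]
  have hfw : f w = Real.log w - 2 * (w - 1) / (w + 1) := rfl
  rw [hf1, hfw] at h
  linarith

lemma log_ratio_le {u : ℝ} (h0 : 0 ≤ u) (h1 : u < 1) :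
    Real.log ((1 + u) / (1 - u)) ≤ 2 * (u + u^3/3 + u^5/(5*(1 - u^2))) := by
  set g : ℝ → ℝ := fun v => 2 * (v + v^3/3 + v^5/(5*(1 - v^2)))
      - Real.log (1 + v) + Real.log (1 - v) with hg
  have hd : ∀ v : ℝ, 0 ≤ v → v < 1 →
      HasDerivAt g (2 * (1 + 3*v^2/3 + (5*v^4 * (5*(1 - v^2)) - v^5 * (5 * (0 - 2*v)))/(5*(1 - v^2))^2)
        - 1/(1 + v) + (-1)/(1 - v)) v := by
    intro v hv0 hv1
    have hne1 : (1:ℝ) + v ≠ 0 := by linarith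
    have hne2 : (1:ℝ) - v ≠ 0 := by linarith
    have hne3 : (5:ℝ)*(1 - v^2) ≠ 0 := by nlinarith
    have hp1 : HasDerivAt (fun w : ℝ => w) 1 v := hasDerivAt_id v
    have hp3 : HasDerivAt (fun w : ℝ => w^3/3) (3*v^2/3) v := (hasDerivAt_pow 3 v).div_const 3
    have hp5 : HasDerivAt (fun w : ℝ => w^5) (5*v^4) v := by
      simpa using hasDerivAt_pow 5 v
    have hden : HasDerivAt (fun w : ℝ => 5*(1 - w^2)) (5 * (0 - 2*v)) v := by
      simpa using ((hasDerivAt_const v (1:ℝ)).sub (by simpa using hasDerivAt_pow 2 v)).const_mul 5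
    have hq : HasDerivAt (fun w : ℝ => w^5/(5*(1 - w^2)))
        ((5*v^4 * (5*(1 - v^2)) - v^5 * (5 * (0 - 2*v)))/(5*(1 - v^2))^2) v := hp5.div hden hne3
    have hpoly : HasDerivAt (fun w : ℝ => 2 * (w + w^3/3 + w^5/(5*(1 - w^2))))
        (2 * (1 + 3*v^2/3 + (5*v^4 * (5*(1 - v^2)) - v^5 * (5 * (0 - 2*v)))/(5*(1 - v^2))^2)) v :=
      ((hp1.add hp3).add hq).const_mul 2
    have hl1 : HasDerivAt (fun w : ℝ => Real.log (1 + w)) (1/(1 + v)) v := by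
      simpa using (((hasDerivAt_id v).const_add 1).log hne1)
    have hl2 : HasDerivAt (fun w : ℝ => Real.log (1 - w)) ((-1)/(1 - v)) v := by
      simpa using (((hasDerivAt_id v).const_sub 1).log hne2)
    exact (hpoly.sub hl1).add hl2
  have hmono : MonotoneOn g (Set.Ico (0:ℝ) 1) := by
    apply monotoneOn_of_deriv_nonneg (convex_Ico 0 1)
    · intro v hv
      exact (hd v hv.1 hv.2).continuousAt.continuousWithinAt
    · intro v hv
      rw [interior_Ico] at hv
      exact (hd v hv.1.le hv.2).differentiableAt.differentiableWithinAt
    · intro v hv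
      rw [interior_Ico] at hv
      have hv0 : 0 < v := hv.1
      have hv1 : v < 1 := hv.2
      rw [(hd v hv0.le hv1).deriv]
      have hpos : (0:ℝ) < 1 - v^2 := by nlinarith
      have key : 2 * (1 + 3*v^2/3 + (5*v^4 * (5*(1 - v^2)) - v^5 * (5 * (0 - 2*v)))/(5*(1 - v^2))^2)
          - 1/(1 + v) + (-1)/(1 - v) = (4*v^6/5) / (1 - v^2)^2 := by
        have h1 : (1:ℝ) + v ≠ 0 := by linarith
        have h2 : (1:ℝ) - v ≠ 0 := by linarith
        have h3 : (1:ℝ) - v^2 ≠ 0 := ne_of_gt hpos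
        field_simp
        ring
      rw [key]
      positivity
  have h := hmono (Set.mem_Ico.2 ⟨le_rfl, one_pos⟩) (Set.mem_Ico.2 ⟨h0, h1⟩) h0
  have hg0 : g 0 = 0 := by simp [hg]
  have hgu : g u = 2 * (u + u^3/3 + u^5/(5*(1 - u^2))) - Real.log (1 + u) + Real.log (1 - u) := rfl
  rw [hg0, hgu] at h
  rw [Real.log_div (by linarith) (by linarith)]
  linarith

private lemma coreA {u : ℝ} (h0 : 0 < u) (h1 : u ≤ 1/2) :
    (4*u*0.6931471808 + (1 - 4*u^2)) * (2*(15*u - 10*u^3 - 2*u^5))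
      < 0.78 * (60*u*(1 - u^2)) := by
  have hcore : 0 < 23.4 - 23.4*u^2 - (4*0.6931471808*u + 1 - 4*u^2)*(15 - 10*u^2 - 2*u^4) := by
    nlinarith [sq_nonneg (u - 0.406), mul_nonneg h0.le (sq_nonneg (u - 0.406)),
      mul_nonneg (sub_nonneg.2 h1) (sq_nonneg (u - 0.406)),
      mul_nonneg (mul_nonneg h0.le (sub_nonneg.2 h1)) (sq_nonneg (u - 0.406)),
      sq_nonneg (u^2 - 0.165), mul_nonneg h0.le (sq_nonneg (u^2 - 0.165)),
      mul_nonneg (sub_nonneg.2 h1) (sq_nonneg (u^2 - 0.165)),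
      sq_nonneg ((u - 0.406)*(u + 0.8)),
      mul_nonneg h0.le (sq_nonneg ((u - 0.406)*(u + 0.8)))]
  nlinarith [mul_pos h0 hcore]

private lemma coreB {u : ℝ} (h0 : 1/2 ≤ u) (h1 : u ≤ 3/5) :
    (0.6931471808*(2*u+1) - 2*(2*u-1)) * (2*(15*u - 10*u^3 - 2*u^5))
      < 0.78 * (15*(2*u+1)*(1 - u^2)) := by
  nlinarith [mul_nonneg (sub_nonneg.2 h0) (sub_nonneg.2 h1), sq_nonneg (u - 0.55),
    mul_nonneg (mul_nonneg (sub_nonneg.2 h0) (sub_nonneg.2 h1)) (sq_nonneg u),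
    mul_nonneg (mul_nonneg (sub_nonneg.2 h0) (sub_nonneg.2 h1)) (sq_nonneg (u-0.55)),
    sq_nonneg (u*(u - 0.55))]

private lemma coreC {u : ℝ} (h0 : 3/5 ≤ u) (h1 : u < 1) :
    (1 - u^2) * (2*(15*u - 10*u^3 - 2*u^5)) < 0.78 * (30*u*(1 - u^2)) := by
  have hu : (0:ℝ) < u := by linarith
  have h2 : (0:ℝ) < 1 - u^2 := by nlinarith
  have h3 : (0:ℝ) < 20*u^2 + 4*u^4 - 6.6 := by nlinarith
  nlinarith [mul_pos (mul_pos hu h2) h3]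

set_option maxHeartbeats 1000000

theorem mul_arsinh_inv_sinh_half_lt (x : ℝ) (hx : 0 < x) :
    x * Real.arsinh (1 / Real.sinh (x / 2)) < 1.56 := by
  set t := x / 2 with ht
  have ht0 : 0 < t := by rw [ht]; linarith
  set u := Real.exp (-t) with hu
  have hu0 : 0 < u := Real.exp_pos _
  have hu1 : u < 1 := by
    rw [hu]; exact Real.exp_lt_one_iff.2 (by linarith)
  have hu2 : (0:ℝ) < 1 - u^2 := by nlinarith
  have hexp : Real.exp t = u⁻¹ := by rw [hu, ← Real.exp_neg, neg_neg]
  have hs2 : Real.sinh t = (1 - u^2)/(2*u) := by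
    rw [Real.sinh_eq, hexp, ← hu]; field_simp
  have hc2 : Real.cosh t = (1 + u^2)/(2*u) := by
    rw [Real.cosh_eq, hexp, ← hu]; field_simp
  have hs0 : 0 < Real.sinh t := by rw [hs2]; positivity
  have hkey : Real.arsinh (1 / Real.sinh t) = Real.log ((1 + u)/(1 - u)) := by
    rw [← Real.log_exp (Real.arsinh _), Real.exp_arsinh]
    congr 1
    have hsq : Real.sqrt (1 + (1 / Real.sinh t)^2) = Real.cosh t / Real.sinh t := by
      rw [show 1 + (1 / Real.sinh t)^2 = (Real.cosh t / Real.sinh t)^2 by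
        have hc := Real.cosh_sq t
        field_simp
        nlinarith [hc]]
      exact Real.sqrt_sq (by positivity)
    rw [hsq, hs2, hc2]
    have h1u : (0:ℝ) < 1 - u := by linarith
    field_simp
    ring
  have hxlog : x = 2 * (-Real.log u) := by
    rw [hu, Real.log_exp]; rw [ht]; ring
  rw [hkey, hxlog]
  set Lg := -Real.log u with hLg
  set LL := Real.log ((1 + u)/(1 - u)) with hLL
  have hLgpos : 0 < Lg := by
    rw [hLg]; simpa using Real.log_neg hu0 hu1
  have hLLnn : 0 ≤ LL := by
    rw [hLL]
    apply Real.log_nonneg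
    rw [le_div_iff₀ (by linarith : (0:ℝ) < 1 - u)]
    linarith
  have hL3 : Real.log ((1 + u)/(1 - u)) ≤ 2 * (u + u^3/3 + u^5/(5*(1 - u^2))) :=
    log_ratio_le hu0.le hu1
  have hL3c : 15*(1 - u^2)*LL ≤ 2*(15*u - 10*u^3 - 2*u^5) := by
    have h := mul_le_mul_of_nonneg_left hL3 (by positivity : (0:ℝ) ≤ 15*(1 - u^2))
    rw [← hLL] at h
    calc 15*(1 - u^2)*LL ≤ 15*(1 - u^2)*(2 * (u + u^3/3 + u^5/(5*(1 - u^2)))) := h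
      _ = 2*(15*u - 10*u^3 - 2*u^5) := by field_simp; ring
  have hL3nn : 0 ≤ 15*(1 - u^2)*LL := by positivity
  have hgoal : Lg * LL < 0.78 := by
    rcases le_or_gt u (1/2) with hcase | hcase
    · -- Case A
      have hw : 1 ≤ 1/(2*u) := by
        rw [le_one_div (by norm_num) (by positivity)]; linarith
      have hb := log_le_sinh_bound hw
      have hsplit : Lg = Real.log 2 + Real.log (1/(2*u)) := by
        rw [hLg, one_div, Real.log_inv, Real.log_mul two_ne_zero (ne_of_gt hu0)]; ring
      have hLgA : 4*u*Lg ≤ 4*u*0.6931471808 + (1 - 4*u^2) := by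
        have hlog2 := Real.log_two_lt_d9
        have he : 4*u*(Real.log 2 + (1/(2*u) - (1/(2*u))⁻¹)/2)
            = 4*u*Real.log 2 + (1 - 4*u^2) := by field_simp; ring
        nlinarith [mul_le_mul_of_nonneg_left hb (by positivity : (0:ℝ) ≤ 4*u)]
      have hb1 : (0:ℝ) ≤ 4*u*0.6931471808 + (1 - 4*u^2) := by nlinarith
      have hC : (0:ℝ) < 60*u*(1 - u^2) := by positivity
      have hchain : 60*u*(1 - u^2) * (Lg * LL) < 60*u*(1 - u^2) * 0.78 := by
        calc 60*u*(1 - u^2) * (Lg * LL) = (4*u*Lg) * (15*(1 - u^2)*LL) := by ring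
          _ ≤ (4*u*0.6931471808 + (1 - 4*u^2)) * (2*(15*u - 10*u^3 - 2*u^5)) :=
              mul_le_mul hLgA hL3c hL3nn hb1
          _ < 0.78 * (60*u*(1 - u^2)) := coreA hu0 hcase
          _ = 60*u*(1 - u^2) * 0.78 := by ring
      exact lt_of_mul_lt_mul_left hchain hC.le
    · rcases le_or_gt u (3/5) with hcase2 | hcase2
      · -- Case B
        have hw : 1 ≤ 2*u := by linarith
        have hb := pade_log_lower hw
        have hsplit : Lg = Real.log 2 - Real.log (2*u) := by
          rw [hLg, Real.log_mul two_ne_zero (ne_of_gt hu0)]; ring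
        have h21 : (0:ℝ) < 2*u+1 := by linarith
        have hLgB : (2*u+1)*Lg ≤ 0.6931471808*(2*u+1) - 2*(2*u-1) := by
          have hlog2 := Real.log_two_lt_d9
          have hmul := mul_le_mul_of_nonneg_left hb (le_of_lt h21)
          have he : (2*u+1) * (2*(2*u - 1)/(2*u + 1)) = 2*(2*u-1) := by
            field_simp
          nlinarith [mul_le_mul_of_nonneg_left hlog2.le (le_of_lt h21)]
        have hb1 : (0:ℝ) ≤ 0.6931471808*(2*u+1) - 2*(2*u-1) := by nlinarith
        have hC : (0:ℝ) < (2*u+1)*(15*(1 - u^2)) := by positivity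
        have hchain : ((2*u+1)*(15*(1 - u^2))) * (Lg * LL)
            < ((2*u+1)*(15*(1 - u^2))) * 0.78 := by
          calc ((2*u+1)*(15*(1 - u^2))) * (Lg * LL) = ((2*u+1)*Lg) * (15*(1 - u^2)*LL) := by ring
            _ ≤ (0.6931471808*(2*u+1) - 2*(2*u-1)) * (2*(15*u - 10*u^3 - 2*u^5)) :=
                mul_le_mul hLgB hL3c hL3nn hb1
            _ < 0.78 * (15*(2*u+1)*(1 - u^2)) := coreB hcase.le hcase2
            _ = ((2*u+1)*(15*(1 - u^2))) * 0.78 := by ring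
        exact lt_of_mul_lt_mul_left hchain hC.le
      · -- Case C
        have hw : 1 ≤ u⁻¹ := by
          rw [le_inv_comm₀ one_pos hu0]; simpa using hu1.le
        have hb := log_le_sinh_bound hw
        have hLgC : 2*u*Lg ≤ 1 - u^2 := by
          have he : Real.log u⁻¹ = Lg := by rw [Real.log_inv, hLg]
          rw [he, inv_inv] at hb
          have hmul := mul_le_mul_of_nonneg_left hb (by positivity : (0:ℝ) ≤ 2*u)
          have he2 : 2*u*((u⁻¹ - u)/2) = 1 - u^2 := by field_simp
          linarith [he2 ▸ hmul]
        have hC : (0:ℝ) < 2*u*(15*(1 - u^2)) := by positivity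
        have hchain : (2*u*(15*(1 - u^2))) * (Lg * LL) < (2*u*(15*(1 - u^2))) * 0.78 := by
          calc (2*u*(15*(1 - u^2))) * (Lg * LL) = (2*u*Lg) * (15*(1 - u^2)*LL) := by ring
            _ ≤ (1 - u^2) * (2*(15*u - 10*u^3 - 2*u^5)) :=
                mul_le_mul hLgC hL3c hL3nn hu2.le
            _ < 0.78 * (30*u*(1 - u^2)) := coreC hcase2.le hu1
            _ = (2*u*(15*(1 - u^2))) * 0.78 := by ring
        exact lt_of_mul_lt_mul_left hchain hC.le
  nlinarith [hgoal]
end
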